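/- For every positive integer k, ∑_{i=1}^∞ (1/(2k+2i+1)) · C(2i,i)/4^i = (π/2)·C(2k,k)/4^k − 1/(2k+1). -/

import Mathlib

open scoped BigOperators
open Real

noncomputable def cb (k : ℕ) : ℝ := (Nat.choose (2*k) k : ℝ) / 4^k

noncomputable def H (k : ℕ) : ℝ := ∑ j ∈ Finset.range k, (1:ℝ)/(j+1)

noncomputable def oh (k : ℕ) : ℝ := ∑ j ∈ Finset.range k, (1:ℝ)/(2*j+1)

/-!
Write `1 / (2k + 2i + 1) = ∫₀^{π/2} sin^{2k+2i} θ cos θ dθ`. Since all terms are nonnegative, the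
series may be summed under the integral, and the binomial series
`∑ cb i tⁱ = (1 - t)^{-1/2}` at `t = sin² θ` collapses the integrand to `sin^{2k} θ`. What remains is
the Wallis integral `∫₀^{π/2} sin^{2k} θ dθ = (π/2) cb k`; the `i = 0` term is `1 / (2k + 1)`.
-/

open MeasureTheory Set

lemma cb_succ (n : ℕ) : cb (n + 1) = cb n * ((2 * n + 1) / (2 * n + 2)) := by
  have h : ((n + 1 : ℕ) : ℝ) * (n + 1).centralBinom = 2 * (2 * n + 1) * n.centralBinom := by
    exact_mod_cast Nat.succ_mul_centralBinom_succ n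
  simp only [cb, ← Nat.centralBinom_eq_two_mul_choose]
  push_cast at h
  field_simp
  rw [pow_succ]
  linear_combination 4 ^ n * 2 * h

lemma cb_nonneg (n : ℕ) : 0 ≤ cb n := by unfold cb; positivity

lemma ascPochhammer_eval_half (n : ℕ) :
    (ascPochhammer ℝ n).eval (1 / 2) = n.factorial * cb n := by
  induction n with
  | zero => simp [cb]
  | succ n ih =>
    rw [ascPochhammer_succ_eval, ih, cb_succ, Nat.factorial_succ]
    push_cast
    field_simp
    ring

lemma ringChoose_eq_cb (n : ℕ) : Ring.choose ((1 / 2 : ℝ) + n - 1) n = cb n := by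
  have h := Ring.factorial_nsmul_multichoose_eq_ascPochhammer (1 / 2 : ℝ) n
  rw [Ring.multichoose_eq, Polynomial.ascPochhammer_smeval_eq_eval, ascPochhammer_eval_half,
    nsmul_eq_mul] at h
  exact mul_left_cancel₀ (by positivity) h

lemma hasSum_cb_mul_pow {t : ℝ} (ht : |t| < 1) :
    HasSum (fun n => cb n * t ^ n) (1 / √(1 - t)) := by
  have h := (Real.one_div_one_sub_rpow_hasFPowerSeriesOnBall_zero (1 / 2)).hasSum
    (y := t) (by simpa [Metric.mem_eball, edist_dist] using ht)
  simp only [FormalMultilinearSeries.ofScalars_apply_eq, ringChoose_eq_cb, smul_eq_mul, zero_add] at h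
  rwa [Real.sqrt_eq_rpow]

lemma hasSum_integral_of_nonneg {α : Type*} [MeasurableSpace α] {μ : Measure α}
    {F : ℕ → α → ℝ} {f : α → ℝ} (hF_meas : ∀ n, AEStronglyMeasurable (F n) μ)
    (hF_nonneg : ∀ n, ∀ᵐ a ∂μ, 0 ≤ F n a) (hf : Integrable f μ)
    (h_lim : ∀ᵐ a ∂μ, HasSum (fun n => F n a) (f a)) :
    HasSum (fun n => ∫ a, F n a ∂μ) (∫ a, f a ∂μ) := by
  refine hasSum_integral_of_dominated_convergence F hF_meas (fun n => ?_)
    (h_lim.mono fun a ha => ha.summable) (hf.congr ?_) h_lim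
  · filter_upwards [hF_nonneg n] with a ha using (Real.norm_of_nonneg ha).le
  · filter_upwards [h_lim] with a ha using ha.tsum_eq.symm

lemma setIntegral_Ioo_zero_pi_div_two {f : ℝ → ℝ} :
    ∫ θ in Ioo 0 (π / 2), f θ = ∫ θ in (0)..(π / 2), f θ := by
  rw [intervalIntegral.integral_of_le (by positivity), integral_Ioc_eq_integral_Ioo]

lemma integral_sin_pow_mul_cos_Ioo_zero_pi_div_two (m : ℕ) :
    ∫ θ in Ioo 0 (π / 2), sin θ ^ m * cos θ = 1 / (m + 1) := by
  rw [setIntegral_Ioo_zero_pi_div_two]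
  simpa using integral_sin_pow_mul_cos_pow_odd (a := 0) (b := π / 2) m 0

lemma integral_sin_pow_even_Ioo_zero_pi_div_two (m : ℕ) :
    ∫ θ in Ioo 0 (π / 2), sin θ ^ (2 * m) = π / 2 * cb m := by
  rw [setIntegral_Ioo_zero_pi_div_two]
  induction m with
  | zero => simp [cb]
  | succ n ih =>
    rw [show 2 * (n + 1) = 2 * n + 2 by ring, integral_sin_pow, ih, cb_succ, sin_zero, cos_pi_div_two, zero_pow (by omega), zero_mul, mul_zero, sub_zero, zero_div,
      zero_add]
    push_cast
    field_simp

lemma hasSum_sin_pow_mul_cos {θ : ℝ} (hθ : θ ∈ Ioo 0 (π / 2)) (k : ℕ) :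
    HasSum (fun i => cb i * (sin θ ^ (2 * (k + i)) * cos θ)) (sin θ ^ (2 * k)) := by
  have hcos : 0 < cos θ := cos_pos_of_mem_Ioo ⟨by linarith [hθ.1, pi_pos], hθ.2⟩
  have hsin : |sin θ ^ 2| < 1 := by
    rw [abs_of_nonneg (sq_nonneg _), ← cos_sq_add_sin_sq θ]
    linarith [pow_pos hcos 2]
  have h := (hasSum_cb_mul_pow hsin).mul_right (sin θ ^ (2 * k) * cos θ)
  rw [← cos_sq', sqrt_sq hcos.le] at h
  rw [one_div_mul_eq_div, mul_div_cancel_right₀ _ hcos.ne'] at h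
  have hterm (i : ℕ) : cb i * (sin θ ^ 2) ^ i * (sin θ ^ (2 * k) * cos θ)
      = cb i * (sin θ ^ (2 * (k + i)) * cos θ) := by
    rw [← pow_mul, mul_add, pow_add]
    ring
  simpa only [hterm] using h

lemma hasSum_cb_div (k : ℕ) :
    HasSum (fun i => cb i / (2 * k + 2 * i + 1)) (π / 2 * cb k) := by
  have hF (i : ℕ) : ∫ θ in Ioo 0 (π / 2), cb i * (sin θ ^ (2 * (k + i)) * cos θ)
      = cb i / (2 * k + 2 * i + 1) := by
    rw [integral_const_mul, integral_sin_pow_mul_cos_Ioo_zero_pi_div_two]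
    push_cast
    ring
  rw [← integral_sin_pow_even_Ioo_zero_pi_div_two, funext fun i => (hF i).symm]
  refine hasSum_integral_of_nonneg (fun i => by fun_prop) (fun i => ?_) ?_
    (ae_restrict_of_forall_mem measurableSet_Ioo fun θ hθ => hasSum_sin_pow_mul_cos hθ k)
  · refine ae_restrict_of_forall_mem measurableSet_Ioo fun θ hθ => ?_
    have hcos := cos_nonneg_of_mem_Icc ⟨by linarith [hθ.1, pi_pos], hθ.2.le⟩
    exact mul_nonneg (cb_nonneg i) (mul_nonneg ((even_two_mul _).pow_nonneg _) hcos)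
  · exact (continuous_sin.pow _).integrableOn_Icc.mono_set Ioo_subset_Icc_self

theorem stmt_13_general (k : ℕ) :
    ∑' i : ℕ, (1/(2*(k:ℝ) + 2*((i:ℝ)+1) + 1)) * cb (i+1)
      = (Real.pi/2) * cb k - 1/(2*(k:ℝ)+1) := by
  have h := (hasSum_nat_add_iff' 1).mpr (hasSum_cb_div k)
  have hterm (i : ℕ) : 1 / (2 * (k : ℝ) + 2 * ((i : ℝ) + 1) + 1) * cb (i + 1)
      = cb (i + 1) / (2 * k + 2 * ((i + 1 : ℕ) : ℝ) + 1) := by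
    push_cast
    ring
  have hfirst : cb 0 / (2 * k + 2 * ((0 : ℕ) : ℝ) + 1) = 1 / (2 * (k : ℝ) + 1) := by simp [cb]
  rw [Finset.sum_range_one, hfirst] at h
  simpa only [hterm] using h.tsum_eq

theorem stmt_13 (k : ℕ) (hk : 0 < k) :
    ∑' i : ℕ, (1/(2*(k:ℝ) + 2*((i:ℝ)+1) + 1)) * cb (i+1)
      = (Real.pi/2) * cb k - 1/(2*(k:ℝ)+1) :=
  stmt_13_general k
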